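/- arXiv:2011.09498 — 7 statements merged into one kernel-verified Lean document; each statement's English description precedes it below -/
import Mathlib

section
/- Let H, F be Hilbert spaces, A ∈ L(H,F), b ∈ F, and W ∈ L(F) positive semidefinite with W^{1/2} Hilbert–Schmidt. If W^{1/2}A is not bounded below (e.g., if dim H = ∞, since then the compact operator W^{1/2}A cannot be bounded below), and b ∉ range(A) + ker(W), then the infimum over X ∈ L(H,F) and x ∈ H of ‖W^{1/2}(A−X)‖₂² + ‖W^{1/2}(Xx−b)‖² equals 0 but is not attained; in particular the weighted total least squares problem has no solution. -/
/-!
If the objective vanished at `(X, x)`, the Hilbert–Schmidt term would force `R (A - X) = 0`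
and the residual term `R (X x - b) = 0`; then `R (A x) = R b`, i.e.
`b ∈ range A + ker R ⊆ range A + ker W`. Summability of the Hilbert–Schmidt term, needed here,
comes from `‖R (A - X)‖₂ ≤ ‖A - X‖ ‖R‖₂`.

For the infimum, failure of `R A` to be bounded below gives, for every `c > 0`, some `x ≠ 0`
with `‖R (A x - b)‖ < c ‖x‖` (scale a vector on which `R A` is small). The rank-one correction
`X = A + ⟪x / ‖x‖², ·⟫ (b - A x)` satisfies `X x = b` exactly, and `R (A - X)` is rank one with
Hilbert–Schmidt norm `‖R (A x - b)‖ / ‖x‖ < c`. A positive function with infimum `0` has no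
minimiser.
-/

open scoped InnerProductSpace InnerProduct

section HilbertBasis

variable {E G G' ι κ : Type*} [NormedAddCommGroup E] [InnerProductSpace ℝ E]
  [NormedAddCommGroup G] [NormedSpace ℝ G] [NormedAddCommGroup G'] [NormedSpace ℝ G']

theorem HilbertBasis.hasSum_inner_sq (e : HilbertBasis ι ℝ E) (x : E) :
    HasSum (fun i => ⟪x, e i⟫_ℝ ^ 2) (‖x‖ ^ 2) := by
  simpa only [real_inner_comm x, ← sq, real_inner_self_eq_norm_sq]
    using e.hasSum_inner_mul_inner x x

theorem HilbertBasis.hasSum_norm_sq_smulRight (e : HilbertBasis ι ℝ E) (y : E) (v : G) :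
    HasSum (fun i => ‖(innerSL ℝ y).smulRight v (e i)‖ ^ 2) (‖y‖ ^ 2 * ‖v‖ ^ 2) := by
  simpa only [ContinuousLinearMap.smulRight_apply, innerSL_apply_apply, norm_smul,
    Real.norm_eq_abs, mul_pow, sq_abs] using (e.hasSum_inner_sq y).mul_right (‖v‖ ^ 2)

theorem HilbertBasis.eq_zero_of_tsum_norm_sq_eq_zero (e : HilbertBasis ι ℝ E) {S : E →L[ℝ] G}
    (hS : Summable fun i => ‖S (e i)‖ ^ 2) (h : ∑' i, ‖S (e i)‖ ^ 2 = 0) : S = 0 := by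
  have hzero : ∀ i, S (e i) = 0 := fun i => by
    have := congrFun ((hasSum_zero_iff_of_nonneg fun _ => sq_nonneg _).1 (h ▸ hS.hasSum)) i
    simpa using this
  exact ContinuousLinearMap.ext_on
    (Submodule.dense_iff_topologicalClosure_eq_top.2 e.dense_span)
    (by rintro _ ⟨i, rfl⟩; simp [hzero i])

/-- Both sides are the sum of `⟪S (e i), f j⟫ ^ 2` over all pairs `(i, j)`. -/
theorem HilbertBasis.summable_norm_sq_apply_of_adjoint {F : Type*} [NormedAddCommGroup F]
    [InnerProductSpace ℝ F] [CompleteSpace E] [CompleteSpace F]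
    (e : HilbertBasis ι ℝ E) (f : HilbertBasis κ ℝ F) (S : E →L[ℝ] F)
    (h : Summable fun j => ‖(S†) (f j)‖ ^ 2) : Summable fun i => ‖S (e i)‖ ^ 2 := by
  set g : κ × ι → ℝ := fun p => ⟪(S†) (f p.1), e p.2⟫_ℝ ^ 2 with hg_def
  have hg : 0 ≤ g := fun _ => sq_nonneg _
  have hrows : Summable g := by
    refine (summable_prod_of_nonneg hg).2 ⟨fun j => (e.hasSum_inner_sq ((S†) (f j))).summable, ?_⟩
    exact h.congr fun j => (e.hasSum_inner_sq ((S†) (f j))).tsum_eq.symm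
  have hcols := ((summable_prod_of_nonneg (f := fun p => g p.swap) fun _ => hg _).1
    hrows.prod_symm).2
  refine hcols.congr fun i => ?_
  simp only [hg_def, Prod.swap_prod_mk, ContinuousLinearMap.adjoint_inner_left,
    real_inner_comm (S (e i))]
  exact (f.hasSum_inner_sq (S (e i))).tsum_eq

theorem HilbertBasis.summable_norm_sq_comp_apply {F : Type*} [NormedAddCommGroup F]
    [InnerProductSpace ℝ F] [CompleteSpace E] [CompleteSpace F]
    (e : HilbertBasis ι ℝ E) (f : HilbertBasis κ ℝ F) {R : F →L[ℝ] F} (hR : IsSelfAdjoint R)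
    (hRf : Summable fun j => ‖R (f j)‖ ^ 2) (T : E →L[ℝ] F) :
    Summable fun i => ‖(R.comp T) (e i)‖ ^ 2 := by
  refine e.summable_norm_sq_apply_of_adjoint f _ ?_
  rw [ContinuousLinearMap.adjoint_comp, hR.adjoint_eq]
  refine (hRf.mul_left (‖T†‖ ^ 2)).of_nonneg_of_le (fun _ => sq_nonneg _) fun j => ?_
  rw [← mul_pow]
  exact pow_le_pow_left₀ (norm_nonneg _) (T†.le_opNorm _) 2

noncomputable def rankOneCorrection (A : E →L[ℝ] G) (x : E) (b : G) : E →L[ℝ] G :=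
  A + (innerSL ℝ ((‖x‖ ^ 2)⁻¹ • x)).smulRight (b - A x)

theorem rankOneCorrection_apply_self (A : E →L[ℝ] G) {x : E} (hx : x ≠ 0) (b : G) :
    rankOneCorrection A x b x = b := by
  simp [rankOneCorrection, hx]

theorem comp_sub_rankOneCorrection (R : G →L[ℝ] G') (A : E →L[ℝ] G) (x : E) (b : G) :
    R.comp (A - rankOneCorrection A x b) =
      (innerSL ℝ ((‖x‖ ^ 2)⁻¹ • x)).smulRight (R (A x - b)) := by
  ext u
  simp only [rankOneCorrection, ContinuousLinearMap.comp_apply, sub_apply,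
    add_apply, ContinuousLinearMap.smulRight_apply, map_sub, map_add, map_smul]
  module

theorem HilbertBasis.hasSum_norm_sq_comp_sub_rankOneCorrection (e : HilbertBasis ι ℝ E)
    (R : G →L[ℝ] G') (A : E →L[ℝ] G) (x : E) (b : G) :
    HasSum (fun i => ‖(R.comp (A - rankOneCorrection A x b)) (e i)‖ ^ 2)
      (‖R (A x - b)‖ ^ 2 / ‖x‖ ^ 2) := by
  convert e.hasSum_norm_sq_smulRight ((‖x‖ ^ 2)⁻¹ • x) (R (A x - b)) using 2
  · rw [comp_sub_rankOneCorrection]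
  · rw [norm_smul, norm_inv, norm_pow, norm_norm]
    by_cases hx : ‖x‖ = 0 <;> field_simp [hx]

end HilbertBasis

theorem LinearMap.mem_range_add_ker_of_apply_eq {R M N P : Type*} [Ring R] [AddCommGroup M]
    [AddCommGroup N] [AddCommGroup P] [Module R M] [Module R N] [Module R P]
    {A : M →ₗ[R] N} {T : N →ₗ[R] P} {b : N} (x : M) (h : T (A x) = T b) :
    b ∈ range A + ker T := by
  rw [← add_sub_cancel (A x) b]
  exact Submodule.add_mem_sup (mem_range_self A x) (by simp [mem_ker, h])

theorem ContinuousLinearMap.exists_ne_zero_norm_sub_lt_of_not_antilipschitz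
    {V W : Type*} [NormedAddCommGroup V] [NormedSpace ℝ V] [SeminormedAddCommGroup W]
    [NormedSpace ℝ W] {T : V →L[ℝ] W} (hT : ¬ ∃ c : ℝ, 0 < c ∧ ∀ x, c * ‖x‖ ≤ ‖T x‖) (v : W)
    {c : ℝ} (hc : 0 < c) : ∃ x, x ≠ 0 ∧ ‖T x - v‖ < c * ‖x‖ := by
  push Not at hT
  obtain ⟨x₀, hx₀⟩ := hT (c / 2) (half_pos hc)
  have hx₀pos : 0 < ‖x₀‖ := pos_of_mul_pos_right ((norm_nonneg _).trans_lt hx₀) (half_pos hc).le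
  -- scaling `x₀` up makes `v` negligible next to `T x₀`
  set t := 2 * (‖v‖ + 1) / (c * ‖x₀‖)
  have ht : 0 < t := by positivity
  have hct : c * (t * ‖x₀‖) = 2 * (‖v‖ + 1) := by simp only [t]; field_simp
  refine ⟨t • x₀, smul_ne_zero ht.ne' (norm_pos_iff.1 hx₀pos), ?_⟩
  rw [map_smul, norm_smul, Real.norm_of_nonneg ht.le, hct]
  calc ‖t • T x₀ - v‖ ≤ t * ‖T x₀‖ + ‖v‖ := by
        simpa [norm_smul, Real.norm_of_nonneg ht.le] using norm_sub_le (t • T x₀) v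
    _ < t * (c / 2 * ‖x₀‖) + ‖v‖ := by gcongr
    _ < 2 * (‖v‖ + 1) := by linarith

section WeightedTotalLeastSquares

variable {H F G ι κ : Type*} [NormedAddCommGroup H] [InnerProductSpace ℝ H]
  [NormedAddCommGroup F] [InnerProductSpace ℝ F] [NormedAddCommGroup G] [NormedSpace ℝ G]

noncomputable def wtlsObjective (e : HilbertBasis ι ℝ H) (R : F →L[ℝ] G) (A : H →L[ℝ] F)
    (b : F) (X : H →L[ℝ] F) (x : H) : ℝ :=
  (∑' i, ‖(R.comp (A - X)) (e i)‖ ^ 2) + ‖R (X x - b)‖ ^ 2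

theorem wtlsObjective_pos [CompleteSpace H] [CompleteSpace F] (e : HilbertBasis ι ℝ H)
    (f : HilbertBasis κ ℝ F) {R : F →L[ℝ] F} (hR : IsSelfAdjoint R)
    (hRf : Summable fun j => ‖R (f j)‖ ^ 2) {A : H →L[ℝ] F} {b : F}
    (hb : b ∉ LinearMap.range (A : H →ₗ[ℝ] F) + LinearMap.ker (R : F →ₗ[ℝ] F))
    (X : H →L[ℝ] F) (x : H) : 0 < wtlsObjective e R A b X x := by
  by_contra! hle
  rw [wtlsObjective] at hle
  obtain ⟨hdist0, hres0⟩ := (add_eq_zero_iff_of_nonneg (tsum_nonneg fun _ => sq_nonneg _)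
    (sq_nonneg _)).1 (hle.antisymm (by positivity))
  have hAX : R.comp (A - X) = 0 :=
    e.eq_zero_of_tsum_norm_sq_eq_zero (e.summable_norm_sq_comp_apply f hR hRf (A - X)) hdist0
  have hAXx : R (A x) = R (X x) := by simpa [sub_eq_zero] using congr($hAX x)
  have hXxb : R (X x) = R b := by simpa [sub_eq_zero] using hres0
  exact hb (LinearMap.mem_range_add_ker_of_apply_eq x (hAXx.trans hXxb))

theorem exists_wtlsObjective_lt (e : HilbertBasis ι ℝ H) {R : F →L[ℝ] G} {A : H →L[ℝ] F}
    (hRA : ¬ ∃ c : ℝ, 0 < c ∧ ∀ x : H, c * ‖x‖ ≤ ‖R (A x)‖) (b : F) {ε : ℝ} (hε : 0 < ε) :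
    ∃ X x, wtlsObjective e R A b X x < ε := by
  obtain ⟨x, hx, hAx⟩ := ContinuousLinearMap.exists_ne_zero_norm_sub_lt_of_not_antilipschitz
    (T := R.comp A) hRA (R b) (Real.sqrt_pos.2 hε)
  refine ⟨rankOneCorrection A x b, x, ?_⟩
  rw [wtlsObjective, (e.hasSum_norm_sq_comp_sub_rankOneCorrection R A x b).tsum_eq,
    rankOneCorrection_apply_self A hx b, sub_self, map_zero, norm_zero, zero_pow two_ne_zero,
    add_zero, div_lt_iff₀ (by positivity), map_sub]
  calc ‖R (A x) - R b‖ ^ 2 < (√ε * ‖x‖) ^ 2 := by gcongr; exact hAx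
    _ = ε * ‖x‖ ^ 2 := by rw [mul_pow, Real.sq_sqrt hε.le]

end WeightedTotalLeastSquares

/-- Let `H, F` be Hilbert spaces, `A ∈ L(H,F)`, `b ∈ F`, `W ∈ L(F)` positive
semidefinite with square root `R = W^{1/2}` Hilbert–Schmidt (summable squared norms over a
Hilbert basis of `F`).  If `W^{1/2}A` is not bounded below and `b ∉ range A + ker W`, then the
infimum over `X ∈ L(H,F)`, `x ∈ H` of `‖W^{1/2}(A−X)‖₂² + ‖W^{1/2}(Xx−b)‖²` (Hilbert–Schmidt
norm computed along a Hilbert basis `e` of `H`) is `0` but never attained: every value of the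
objective is positive while values get arbitrarily small; in particular the weighted total
least squares problem has no solution. -/
theorem stmt1_WTLS_no_solution
    {H F ι ι' : Type*} [NormedAddCommGroup H] [InnerProductSpace ℝ H] [CompleteSpace H]
    [NormedAddCommGroup F] [InnerProductSpace ℝ F] [CompleteSpace F]
    (A : H →L[ℝ] F) (b : F) (W R : F →L[ℝ] F)
    (hR : R.IsPositive) (hRW : R.comp R = W)
    (f : HilbertBasis ι' ℝ F) (hHS : Summable fun i => ‖R (f i)‖ ^ 2)
    (e : HilbertBasis ι ℝ H)
    (hnb : ¬ ∃ c : ℝ, 0 < c ∧ ∀ x : H, c * ‖x‖ ≤ ‖R (A x)‖)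
    (hb : b ∉ LinearMap.range (A : H →ₗ[ℝ] F) + LinearMap.ker (W : F →ₗ[ℝ] F)) :
    (∀ (X : H →L[ℝ] F) (x : H),
        0 < (∑' i, ‖(R.comp (A - X)) (e i)‖ ^ 2) + ‖R (X x - b)‖ ^ 2) ∧
    (∀ ε : ℝ, 0 < ε → ∃ (X : H →L[ℝ] F) (x : H),
        (∑' i, ‖(R.comp (A - X)) (e i)‖ ^ 2) + ‖R (X x - b)‖ ^ 2 < ε) ∧
    ¬ ∃ (X₀ : H →L[ℝ] F) (x₀ : H), ∀ (X : H →L[ℝ] F) (x : H),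
        (∑' i, ‖(R.comp (A - X₀)) (e i)‖ ^ 2) + ‖R (X₀ x₀ - b)‖ ^ 2 ≤
          (∑' i, ‖(R.comp (A - X)) (e i)‖ ^ 2) + ‖R (X x - b)‖ ^ 2 := by
  have hker : LinearMap.ker (R : F →ₗ[ℝ] F) ≤ LinearMap.ker (W : F →ₗ[ℝ] F) := fun y hy => by
    rw [LinearMap.mem_ker, ContinuousLinearMap.coe_coe] at hy ⊢
    rw [← hRW, ContinuousLinearMap.comp_apply, hy, map_zero]
  have hpos := wtlsObjective_pos e f hR.isSelfAdjoint hHS fun h => hb (sup_le_sup_left hker _ h)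
  have hsmall := fun ε (hε : 0 < ε) => exists_wtlsObjective_lt e hnb b hε
  refine ⟨hpos, hsmall, ?_⟩
  rintro ⟨X₀, x₀, hmin⟩
  obtain ⟨X, x, hlt⟩ := hsmall _ (hpos X₀ x₀)
  exact (hmin X x).not_gt hlt
end

section
/- Let E₀, E₁ be normed spaces, W₀ ∈ L(E₁) with W₀A not bounded below, W₁ ∈ L(E₁), b ∉ range(A)+ker(W₀)+ker(W₁), and A ∈ L(E₀,E₁). For every ε > 0 there exist X₀ ∈ L(E₀,E₁) and y ∈ E₀ such that W₁(X₀y − b) = 0 and ‖W₀(A − X₀)‖_{op} ≤ ε(‖W₀b‖ + 1); consequently the infimum of ‖W₀(A−X)‖_{op}² + ‖W₁(Xx−b)‖² over (X,x) is 0 and is not attained. -/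
/-!
Pick a unit vector `x` on which `W₀ A` is small and a norming functional `g` of `x`. The rank-one
perturbation `X₀ = A + g(·) (ε b - A x)` maps `ε⁻¹ x` exactly to `b`, while `W₀ (A - X₀)` has norm
`‖W₀ (ε b - A x)‖ ≤ ε ‖W₀ b‖ + ‖W₀ A x‖`; hence the objective can be made arbitrarily small.
It never vanishes: `W₀ (A - X) = 0` and `W₁ (X x - b) = 0` would give
`b = A x + (X x - A x) + (b - X x) ∈ range A + ker W₀ + ker W₁`.
-/

open ContinuousLinearMap

section RankOne

variable {𝕜 E F G : Type*} [RCLike 𝕜] [NormedAddCommGroup E] [NormedSpace 𝕜 E]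
  [NormedAddCommGroup F] [NormedSpace 𝕜 F] [NormedAddCommGroup G] [NormedSpace 𝕜 G]

theorem exists_apply_eq_and_norm_comp_eq {x : E} (hx : ‖x‖ = 1) (v : F) (W : F →L[𝕜] G) :
    ∃ D : E →L[𝕜] F, D x = v ∧ ‖W.comp D‖ = ‖W v‖ := by
  obtain ⟨g, hg_norm, hg_x⟩ := exists_dual_vector 𝕜 x (by simp [hx])
  have hW_comp : W.comp (g.smulRight v) = g.smulRight (W v) := by ext; simp
  refine ⟨g.smulRight v, by simp [hg_x, hx], ?_⟩
  rw [hW_comp, norm_smulRight_apply, hg_norm, one_mul]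

theorem exists_apply_eq_and_norm_comp_sub_le (A : E →L[𝕜] F) (W : F →L[𝕜] G) (b : F)
    {x : E} (hx : ‖x‖ = 1) {ε : ℝ} (hε : 0 < ε) :
    ∃ (X : E →L[𝕜] F) (y : E), X y = b ∧ ‖W.comp (A - X)‖ ≤ ε * ‖W b‖ + ‖W (A x)‖ := by
  obtain ⟨D, hD_x, hD_norm⟩ := exists_apply_eq_and_norm_comp_eq hx ((ε : 𝕜) • b - A x) W
  have hε' : (ε : 𝕜) ≠ 0 := RCLike.ofReal_ne_zero.mpr hε.ne'
  refine ⟨A + D, (ε : 𝕜)⁻¹ • x, ?_, ?_⟩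
  · simp [hD_x, smul_smul, hε']
  · calc ‖W.comp (A - (A + D))‖ = ‖W.comp D‖ := by simp
      _ = ‖(ε : 𝕜) • W b - W (A x)‖ := by rw [hD_norm, map_sub, map_smul]
      _ ≤ ε * ‖W b‖ + ‖W (A x)‖ := by
        refine (norm_sub_le _ _).trans_eq ?_
        rw [norm_smul, RCLike.norm_ofReal, abs_of_pos hε]

end RankOne

theorem mem_range_add_ker_add_ker {R M N P Q : Type*} [Ring R] [AddCommGroup M] [Module R M]
    [AddCommGroup N] [Module R N] [AddCommGroup P] [Module R P] [AddCommGroup Q] [Module R Q]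
    {A X : M →ₗ[R] N} {W₀ : N →ₗ[R] P} {W₁ : N →ₗ[R] Q} {b : N} (x : M)
    (h₀ : W₀ (A x) = W₀ (X x)) (h₁ : W₁ (X x) = W₁ b) :
    b ∈ LinearMap.range A + LinearMap.ker W₀ + LinearMap.ker W₁ := by
  have hb : b = A x + (X x - A x) + (b - X x) := by abel
  rw [hb]
  exact Submodule.add_mem_sup (Submodule.add_mem_sup ⟨x, rfl⟩ (by simp [h₀])) (by simp [h₁])

theorem stmt2_TLS_inf_zero_not_attained_general
    {E₀ E₁ : Type*} [NormedAddCommGroup E₀] [NormedSpace ℝ E₀]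
    [NormedAddCommGroup E₁] [NormedSpace ℝ E₁]
    (W₀ W₁ : E₁ →L[ℝ] E₁) (A : E₀ →L[ℝ] E₁) (b : E₁)
    (hnb : ∀ ε : ℝ, 0 < ε → ∃ x : E₀, ‖x‖ = 1 ∧ ‖W₀ (A x)‖ < ε)
    (hb : b ∉ LinearMap.range (A : E₀ →ₗ[ℝ] E₁) + LinearMap.ker (W₀ : E₁ →ₗ[ℝ] E₁) + LinearMap.ker (W₁ : E₁ →ₗ[ℝ] E₁)) :
    (∀ ε : ℝ, 0 < ε → ∃ (X₀ : E₀ →L[ℝ] E₁) (y : E₀),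
        W₁ (X₀ y - b) = 0 ∧ ‖W₀.comp (A - X₀)‖ ≤ ε * (‖W₀ b‖ + 1)) ∧
    (∀ (X : E₀ →L[ℝ] E₁) (x : E₀),
        0 < ‖W₀.comp (A - X)‖ ^ 2 + ‖W₁ (X x - b)‖ ^ 2) ∧
    (∀ ε : ℝ, 0 < ε → ∃ (X : E₀ →L[ℝ] E₁) (x : E₀),
        ‖W₀.comp (A - X)‖ ^ 2 + ‖W₁ (X x - b)‖ ^ 2 < ε) := by
  have approx : ∀ ε : ℝ, 0 < ε → ∃ (X₀ : E₀ →L[ℝ] E₁) (y : E₀),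
      W₁ (X₀ y - b) = 0 ∧ ‖W₀.comp (A - X₀)‖ ≤ ε * (‖W₀ b‖ + 1) := by
    intro ε hε
    obtain ⟨x, hx, hAx⟩ := hnb ε hε
    obtain ⟨X₀, y, hy, hX₀⟩ := exists_apply_eq_and_norm_comp_sub_le A W₀ b hx hε
    exact ⟨X₀, y, by simp [hy], by linarith⟩
  refine ⟨approx, fun X x => ?_, fun ε hε => ?_⟩
  · by_cases hX : W₀.comp (A - X) = 0
    · have hXx : W₁ (X x - b) ≠ 0 := fun h => hb <|
        mem_range_add_ker_add_ker (X := (X : E₀ →ₗ[ℝ] E₁)) x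
          (by simpa [sub_eq_zero] using congr($hX x)) (by simpa [sub_eq_zero] using h)
      rw [hX, norm_zero]
      positivity
    · positivity
  · obtain ⟨X₀, y, hy, hX₀⟩ := approx (√ε / (2 * (‖W₀ b‖ + 1))) (by positivity)
    have hX₀' : ‖W₀.comp (A - X₀)‖ ≤ √ε / 2 := by
      rwa [div_mul_eq_mul_div, mul_div_mul_right _ _ (by positivity)] at hX₀
    refine ⟨X₀, y, ?_⟩
    rw [hy, norm_zero]
    nlinarith [Real.sq_sqrt hε.le, norm_nonneg (W₀.comp (A - X₀))]

/-- Normed spaces `E₀ ≠ {0}`, `E₁`; `W₀, W₁ ∈ L(E₁)`, `A ∈ L(E₀,E₁)` with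
`W₀A` not bounded below (for every `ε > 0` there is a unit vector `x` with `‖W₀Ax‖ < ε`),
and `b ∉ range A + ker W₀ + ker W₁`.  Then for every `ε > 0` there exist
`X₀ ∈ L(E₀,E₁)` and `y ∈ E₀` with `W₁(X₀y − b) = 0` and
`‖W₀ ∘ (A − X₀)‖ ≤ ε(‖W₀b‖ + 1)`; consequently the infimum of
`‖W₀(A−X)‖² + ‖W₁(Xx−b)‖²` is `0` (values get arbitrarily small) and is never attained
(every value is positive). -/
theorem stmt2_TLS_inf_zero_not_attained
    {E₀ E₁ : Type*} [NormedAddCommGroup E₀] [NormedSpace ℝ E₀] [Nontrivial E₀]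
    [NormedAddCommGroup E₁] [NormedSpace ℝ E₁]
    (W₀ W₁ : E₁ →L[ℝ] E₁) (A : E₀ →L[ℝ] E₁) (b : E₁)
    (hnb : ∀ ε : ℝ, 0 < ε → ∃ x : E₀, ‖x‖ = 1 ∧ ‖W₀ (A x)‖ < ε)
    (hb : b ∉ LinearMap.range (A : E₀ →ₗ[ℝ] E₁) + LinearMap.ker (W₀ : E₁ →ₗ[ℝ] E₁) + LinearMap.ker (W₁ : E₁ →ₗ[ℝ] E₁)) :
    (∀ ε : ℝ, 0 < ε → ∃ (X₀ : E₀ →L[ℝ] E₁) (y : E₀),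
        W₁ (X₀ y - b) = 0 ∧ ‖W₀.comp (A - X₀)‖ ≤ ε * (‖W₀ b‖ + 1)) ∧
    (∀ (X : E₀ →L[ℝ] E₁) (x : E₀),
        0 < ‖W₀.comp (A - X)‖ ^ 2 + ‖W₁ (X x - b)‖ ^ 2) ∧
    (∀ ε : ℝ, 0 < ε → ∃ (X : E₀ →L[ℝ] E₁) (x : E₀),
        ‖W₀.comp (A - X)‖ ^ 2 + ‖W₁ (X x - b)‖ ^ 2 < ε) :=
  stmt2_TLS_inf_zero_not_attained_general W₀ W₁ A b hnb hb
end

section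
/- Let H, F be Hilbert spaces, A ∈ L(H,F), b ∈ F, W ∈ L(F)⁺ with W^{1/2} ∈ S₂ injective on its action from H infinite dimensional, and suppose A is not injective. If b ∉ range(A) + ker(W), then the weighted total least squares problem min over X ∈ L(H,F), x ∈ H of ‖A−X‖²_{2,W} + ‖Xx−b‖²_W has no solution. -/
/-!
If `A v = 0` with `‖v‖ = 1`, then `X = A + ⟪v, ·⟫ ε b` and `x = ε⁻¹ v` satisfy `X x = b` while
`‖A - X‖²_{2,W} = ε² ‖b‖²_W`, so the infimum of the objective is `0`. A minimizer `(X₀, x₀)` would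
therefore have `W^{1/2} (X₀ x₀ - b) = 0` and `W^{1/2} (A - X₀) = 0`, whence `b - A x₀ ∈ ker W`.
The second equation needs `W^{1/2} (A - X₀)` to be Hilbert–Schmidt: otherwise the `tsum` defining
its norm is `0` by convention.
-/

open RealInnerProductSpace Filter

namespace HilbertBasis

variable {ι ι' H F : Type*} [NormedAddCommGroup H] [InnerProductSpace ℝ H]
  [NormedAddCommGroup F] [InnerProductSpace ℝ F]

theorem hasSum_inner_sq_s3 (e : HilbertBasis ι ℝ H) (x : H) :
    HasSum (fun i => ⟪e i, x⟫ ^ 2) (‖x‖ ^ 2) := by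
  have h := e.hasSum_inner_mul_inner x x
  rw [real_inner_self_eq_norm_sq] at h
  exact h.congr_fun fun i => by rw [sq, real_inner_comm]

theorem eq_zero_of_tsum_norm_sq_eq_zero_s3 (e : HilbertBasis ι ℝ H) {T : H →L[ℝ] F}
    (hs : Summable fun i => ‖T (e i)‖ ^ 2) (h : ∑' i, ‖T (e i)‖ ^ 2 = 0) : T = 0 := by
  have hsq : (fun i => ‖T (e i)‖ ^ 2) = 0 :=
    (hasSum_zero_iff_of_nonneg fun _ => sq_nonneg _).mp (h ▸ hs.hasSum)
  have hzero : ∀ i, T (e i) = 0 := fun i => by simpa using congrFun hsq i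
  refine ContinuousLinearMap.ext_on
    (Submodule.dense_iff_topologicalClosure_eq_top.mpr e.dense_span) ?_
  rintro _ ⟨i, rfl⟩
  simp [hzero i]

theorem tsum_norm_sq_smulRight (e : HilbertBasis ι ℝ H) (v : H) (y : F) :
    ∑' i, ‖((innerSL ℝ v).smulRight y) (e i)‖ ^ 2 = ‖v‖ ^ 2 * ‖y‖ ^ 2 := by
  have hterm : ∀ i, ‖((innerSL ℝ v).smulRight y) (e i)‖ ^ 2 = ⟪e i, v⟫ ^ 2 * ‖y‖ ^ 2 := by
    intro i
    rw [ContinuousLinearMap.smulRight_apply, innerSL_apply_apply, norm_smul, mul_pow,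
      Real.norm_eq_abs, sq_abs, real_inner_comm]
  rw [tsum_congr hterm]
  exact ((e.hasSum_inner_sq_s3 v).mul_right _).tsum_eq

variable [CompleteSpace H] [CompleteSpace F]

/-- Both sums compute the double sum `∑ i j, ⟪f j, S (e i)⟫²`. -/
theorem summable_norm_sq_of_summable_adjoint (e : HilbertBasis ι ℝ H)
    (f : HilbertBasis ι' ℝ F) {S : H →L[ℝ] F}
    (h : Summable fun j => ‖S.adjoint (f j)‖ ^ 2) : Summable fun i => ‖S (e i)‖ ^ 2 := by
  have key : ∀ j i, ⟪f j, S (e i)⟫ ^ 2 = ⟪e i, S.adjoint (f j)⟫ ^ 2 := fun j i => by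
    rw [← ContinuousLinearMap.adjoint_inner_left, real_inner_comm]
  have hrow : ∀ j, HasSum (fun i => ⟪f j, S (e i)⟫ ^ 2) (‖S.adjoint (f j)‖ ^ 2) := fun j => by
    simpa only [key] using e.hasSum_inner_sq_s3 (S.adjoint (f j))
  have hdouble : Summable fun p : ι' × ι => ⟪f p.1, S (e p.2)⟫ ^ 2 :=
    (summable_prod_of_nonneg fun _ => sq_nonneg _).mpr
      ⟨fun j => (hrow j).summable, h.congr fun j => (hrow j).tsum_eq.symm⟩
  have hswap := (summable_prod_of_nonneg fun _ => sq_nonneg _).mp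
    ((Equiv.prodComm ι ι').summable_iff.mpr hdouble)
  exact hswap.2.congr fun i => (f.hasSum_inner_sq_s3 (S (e i))).tsum_eq

theorem summable_norm_sq_comp (e : HilbertBasis ι ℝ H) (f : HilbertBasis ι' ℝ F)
    {R : F →L[ℝ] F} (hR : IsSelfAdjoint R) (hHS : Summable fun j => ‖R (f j)‖ ^ 2)
    (T : H →L[ℝ] F) : Summable fun i => ‖(R.comp T) (e i)‖ ^ 2 := by
  refine e.summable_norm_sq_of_summable_adjoint f ?_
  rw [ContinuousLinearMap.adjoint_comp, hR.adjoint_eq]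
  refine Summable.of_nonneg_of_le (fun _ => sq_nonneg _) (fun j => ?_)
    (hHS.mul_left (‖T.adjoint‖ ^ 2))
  rw [← mul_pow]
  gcongr
  exact T.adjoint.le_opNorm _

end HilbertBasis

section WTLS

variable {ι H F : Type*} [NormedAddCommGroup H] [InnerProductSpace ℝ H]
  [NormedAddCommGroup F] [InnerProductSpace ℝ F]

/-- The weighted total least squares objective `‖A - X‖²_{2,W} + ‖X x - b‖²_W`, with the weight
`W` entering through its square root `R`. -/
noncomputable def wtlsCost (e : HilbertBasis ι ℝ H) (R : F →L[ℝ] F) (A : H →L[ℝ] F) (b : F)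
    (X : H →L[ℝ] F) (x : H) : ℝ :=
  (∑' i, ‖(R.comp (A - X)) (e i)‖ ^ 2) + ‖R (X x - b)‖ ^ 2

theorem wtlsCost_rankOne_update (e : HilbertBasis ι ℝ H) (R : F →L[ℝ] F) {A : H →L[ℝ] F}
    (b : F) {v : H} (hv : ‖v‖ = 1) (hAv : A v = 0) {ε : ℝ} (hε : ε ≠ 0) :
    wtlsCost e R A b (A + (innerSL ℝ v).smulRight (ε • b)) (ε⁻¹ • v) = ε ^ 2 * ‖R b‖ ^ 2 := by
  have hfit : (A + (innerSL ℝ v).smulRight (ε • b)) (ε⁻¹ • v) = b := by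
    simp [hAv, hv, smul_smul, hε]
  have hres : R.comp (A - (A + (innerSL ℝ v).smulRight (ε • b)))
      = -(innerSL ℝ v).smulRight (ε • R b) := by
    ext x
    simp
  rw [wtlsCost, hfit, hres]
  simp only [neg_apply, norm_neg, e.tsum_norm_sq_smulRight, hv, norm_smul,
    sub_self, map_zero, norm_zero, Real.norm_eq_abs]
  rw [mul_pow, sq_abs]
  ring

theorem wtlsCost_nonneg (e : HilbertBasis ι ℝ H) (R : F →L[ℝ] F) (A : H →L[ℝ] F) (b : F)
    (X : H →L[ℝ] F) (x : H) : 0 ≤ wtlsCost e R A b X x :=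
  add_nonneg (tsum_nonneg fun _ => sq_nonneg _) (sq_nonneg _)

theorem le_zero_of_le_wtlsCost_of_not_injective (e : HilbertBasis ι ℝ H) (R : F →L[ℝ] F)
    {A : H →L[ℝ] F} (b : F) (hA : ¬ Function.Injective A) {c : ℝ}
    (hc : ∀ X x, c ≤ wtlsCost e R A b X x) : c ≤ 0 := by
  obtain ⟨u, w, huw, hne⟩ := Function.not_injective_iff.mp hA
  have hv0 : ‖u - w‖ ≠ 0 := norm_ne_zero_iff.mpr (sub_ne_zero.mpr hne)
  set v := ‖u - w‖⁻¹ • (u - w)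
  have hv : ‖v‖ = 1 := by rw [norm_smul, norm_inv, norm_norm, inv_mul_cancel₀ hv0]
  have hAv : A v = 0 := by simp [v, huw]
  have hlim : Tendsto (fun n : ℕ => (1 / ((n : ℝ) + 1)) ^ 2 * ‖R b‖ ^ 2) atTop (nhds 0) := by
    simpa using (tendsto_one_div_add_atTop_nhds_zero_nat.pow 2).mul_const (‖R b‖ ^ 2)
  refine ge_of_tendsto' hlim fun n => ?_
  rw [← wtlsCost_rankOne_update e R b hv hAv (by positivity)]
  exact hc _ _

theorem mem_range_add_ker_of_wtlsCost_eq_zero [CompleteSpace H] [CompleteSpace F]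
    {ι' : Type*} (e : HilbertBasis ι ℝ H) (f : HilbertBasis ι' ℝ F) {R : F →L[ℝ] F}
    (hR : IsSelfAdjoint R) (hHS : Summable fun j => ‖R (f j)‖ ^ 2) {A X : H →L[ℝ] F} {b : F}
    {x : H} (h : wtlsCost e R A b X x = 0) :
    b ∈ LinearMap.range (A : H →ₗ[ℝ] F) + LinearMap.ker ((R.comp R : F →L[ℝ] F) : F →ₗ[ℝ] F) := by
  have hnonneg : 0 ≤ ∑' i, ‖(R.comp (A - X)) (e i)‖ ^ 2 := tsum_nonneg fun _ => sq_nonneg _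
  rw [wtlsCost] at h
  have hRAX : R.comp (A - X) = 0 :=
    e.eq_zero_of_tsum_norm_sq_eq_zero_s3 (e.summable_norm_sq_comp f hR hHS _)
      (by nlinarith [sq_nonneg ‖R (X x - b)‖])
  have hRXb : R (X x - b) = 0 := by
    simpa using (show ‖R (X x - b)‖ ^ 2 = 0 by nlinarith [sq_nonneg ‖R (X x - b)‖])
  have hR_res : R (b - A x) = 0 := by
    have hRAXx : R (A x) - R (X x) = 0 := by
      simpa using congrArg (fun S : H →L[ℝ] F => S x) hRAX
    rw [map_sub] at hRXb ⊢
    rw [show R b - R (A x) = -(R (X x) - R b) - (R (A x) - R (X x)) by abel, hRXb, hRAXx]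
    simp
  rw [Submodule.add_eq_sup, Submodule.mem_sup]
  refine ⟨A x, ⟨x, rfl⟩, b - A x, ?_, add_sub_cancel _ _⟩
  simp [hR_res]

end WTLS

theorem stmt3_WTLS_no_solution_A_not_injective_general
    {H F ι ι' : Type*} [NormedAddCommGroup H] [InnerProductSpace ℝ H] [CompleteSpace H]
    [NormedAddCommGroup F] [InnerProductSpace ℝ F] [CompleteSpace F]
    (A : H →L[ℝ] F) (b : F) (W R : F →L[ℝ] F)
    (hR : R.IsPositive) (hRW : R.comp R = W)
    (f : HilbertBasis ι' ℝ F) (hHS : Summable fun i => ‖R (f i)‖ ^ 2)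
    (e : HilbertBasis ι ℝ H)
    (hA : ¬ Function.Injective A)
    (hb : b ∉ LinearMap.range (A : H →ₗ[ℝ] F) + LinearMap.ker (W : F →ₗ[ℝ] F)) :
    ¬ ∃ (X₀ : H →L[ℝ] F) (x₀ : H), ∀ (X : H →L[ℝ] F) (x : H),
        (∑' i, ‖(R.comp (A - X₀)) (e i)‖ ^ 2) + ‖R (X₀ x₀ - b)‖ ^ 2 ≤
          (∑' i, ‖(R.comp (A - X)) (e i)‖ ^ 2) + ‖R (X x - b)‖ ^ 2 := by
  rintro ⟨X₀, x₀, hmin⟩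
  have hzero : wtlsCost e R A b X₀ x₀ = 0 :=
    (le_zero_of_le_wtlsCost_of_not_injective e R b hA hmin).antisymm
      (wtlsCost_nonneg e R A b X₀ x₀)
  subst hRW
  exact hb (mem_range_add_ker_of_wtlsCost_eq_zero e f hR.isSelfAdjoint hHS hzero)

/-- Let `H, F` be Hilbert spaces with `H` infinite dimensional, `A ∈ L(H,F)`,
`b ∈ F`, `W ∈ L(F)` positive with square root `R = W^{1/2}` Hilbert–Schmidt.  If `A` is not
injective and `b ∉ range A + ker W`, then the weighted total least squares problem
`min_{X,x} ‖A−X‖²_{2,W} + ‖Xx−b‖²_W` has no solution (no global minimizer exists). -/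
theorem stmt3_WTLS_no_solution_A_not_injective
    {H F ι ι' : Type*} [NormedAddCommGroup H] [InnerProductSpace ℝ H] [CompleteSpace H]
    [NormedAddCommGroup F] [InnerProductSpace ℝ F] [CompleteSpace F]
    (hdim : ¬ FiniteDimensional ℝ H)
    (A : H →L[ℝ] F) (b : F) (W R : F →L[ℝ] F)
    (hR : R.IsPositive) (hRW : R.comp R = W)
    (f : HilbertBasis ι' ℝ F) (hHS : Summable fun i => ‖R (f i)‖ ^ 2)
    (e : HilbertBasis ι ℝ H)
    (hA : ¬ Function.Injective A)
    (hb : b ∉ LinearMap.range (A : H →ₗ[ℝ] F) + LinearMap.ker (W : F →ₗ[ℝ] F)) :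
    ¬ ∃ (X₀ : H →L[ℝ] F) (x₀ : H), ∀ (X : H →L[ℝ] F) (x : H),
        (∑' i, ‖(R.comp (A - X₀)) (e i)‖ ^ 2) + ‖R (X₀ x₀ - b)‖ ^ 2 ≤
          (∑' i, ‖(R.comp (A - X)) (e i)‖ ^ 2) + ‖R (X x - b)‖ ^ 2 :=
  stmt3_WTLS_no_solution_A_not_injective_general A b W R hR hRW f hHS e hA hb
end

section
/- Let H be a real Hilbert space, A ∈ L(H,F), b ∈ F, W ∈ L(F)⁺ with W^{1/2} ∈ S₂, ρ > 0, and let t* = inf_{x∈H} [ ‖Ax−b‖²_W/(1+‖x‖²) + ρ‖x‖² ]. Then: (a) inf_{x} [ ‖Ax−b‖²_W + ρ‖x‖⁴ + (ρ − t*)‖x‖² − t* ] = 0; (b) x₀ minimizes G(x) = ‖Ax−b‖²_W/(1+‖x‖²) + ρ‖x‖² if and only if x₀ minimizes x ↦ ‖Ax−b‖²_W + ρ‖x‖⁴ + (ρ−t*)‖x‖² − t*, and at any such minimizer the latter expression equals 0. -/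
/-!
The quartic objective equals `(1 + ‖x‖²) (G x - t*)`. Since the weight `1 + ‖x‖²` is positive,
it is nonnegative and vanishes exactly where `G` attains `t*`. Its infimum is `0` because
`ρ‖x‖² ≤ G x` keeps the weight bounded along a minimizing sequence of `G`.
-/

open Filter Topology Set

section Dinkelbach

variable {ι : Type*} {g w : ι → ℝ}

theorem forall_le_iff_eq_ciInf (hg : BddBelow (range g)) {i₀ : ι} :
    (∀ i, g i₀ ≤ g i) ↔ g i₀ = ⨅ i, g i :=
  have : Nonempty ι := ⟨i₀⟩
  ⟨fun h => le_antisymm (le_ciInf h) (ciInf_le hg i₀), fun h i => h ▸ ciInf_le hg i⟩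

theorem ciInf_mul_sub_ciInf_eq_zero [Nonempty ι] (hg : BddBelow (range g)) (hw : ∀ i, 0 ≤ w i)
    {s M : ℝ} (hs : ⨅ i, g i < s) (hwM : ∀ i, g i < s → w i ≤ M) :
    ⨅ i, w i * (g i - ⨅ j, g j) = 0 := by
  set t := ⨅ j, g j
  have hnonneg : ∀ i, 0 ≤ w i * (g i - t) := fun i =>
    mul_nonneg (hw i) (sub_nonneg.2 (ciInf_le hg i))
  refine le_antisymm ?_ (le_ciInf hnonneg)
  obtain ⟨u, -, -, hu, hu_mem⟩ := (isGLB_ciInf hg).exists_seq_antitone_tendsto (range_nonempty g)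
  choose x hx using hu_mem
  have hgx : Tendsto (fun n => g (x n)) atTop (𝓝 t) := by simpa only [hx] using hu
  have hw_le : ∀ᶠ n in atTop, w (x n) ≤ M :=
    (hgx.eventually (eventually_lt_nhds hs)).mono fun n => hwM (x n)
  have hlim : Tendsto (fun n => w (x n) * (g (x n) - t)) atTop (𝓝 0) :=
    bdd_le_mul_tendsto_zero (.of_forall fun n => hw (x n)) hw_le
      (by simpa only [sub_self] using hgx.sub_const t)
  exact ge_of_tendsto hlim (.of_forall fun n => ciInf_le ⟨0, forall_mem_range.2 hnonneg⟩ (x n))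

theorem dinkelbach [Nonempty ι] (hg : BddBelow (range g)) (hw : ∀ i, 0 < w i)
    {s M : ℝ} (hs : ⨅ i, g i < s) (hwM : ∀ i, g i < s → w i ≤ M) :
    ⨅ i, w i * (g i - ⨅ j, g j) = 0 ∧
      ∀ i₀, ((∀ i, g i₀ ≤ g i) ↔
          ∀ i, w i₀ * (g i₀ - ⨅ j, g j) ≤ w i * (g i - ⨅ j, g j)) ∧
        ((∀ i, g i₀ ≤ g i) → w i₀ * (g i₀ - ⨅ j, g j) = 0) := by
  have hinf := ciInf_mul_sub_ciInf_eq_zero hg (fun i => (hw i).le) hs hwM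
  have hφ_bdd : BddBelow (range fun i => w i * (g i - ⨅ j, g j)) :=
    ⟨0, forall_mem_range.2 fun i => mul_nonneg (hw i).le (sub_nonneg.2 (ciInf_le hg i))⟩
  have hmin_iff : ∀ i₀, (∀ i, g i₀ ≤ g i) ↔ w i₀ * (g i₀ - ⨅ j, g j) = 0 := fun i₀ => by
    rw [forall_le_iff_eq_ciInf hg, mul_eq_zero, sub_eq_zero, or_iff_right (hw i₀).ne']
  refine ⟨hinf, fun i₀ => ⟨?_, (hmin_iff i₀).1⟩⟩
  rw [forall_le_iff_eq_ciInf hφ_bdd, hinf, hmin_iff]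

end Dinkelbach

theorem stmt12_dinkelbach_general
    {H F : Type*} [NormedAddCommGroup H] [InnerProductSpace ℝ H]
    [NormedAddCommGroup F] [InnerProductSpace ℝ F]
    (A : H →L[ℝ] F) (b : F) (R : F →L[ℝ] F)
    (ρ : ℝ) (hρ : 0 < ρ) (t : ℝ)
    (ht : t = ⨅ x : H, (‖R (A x - b)‖ ^ 2 / (1 + ‖x‖ ^ 2) + ρ * ‖x‖ ^ 2)) :
    (⨅ x : H, (‖R (A x - b)‖ ^ 2 + ρ * ‖x‖ ^ 4 + (ρ - t) * ‖x‖ ^ 2 - t)) = 0 ∧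
    ∀ x₀ : H,
      ((∀ x : H, ‖R (A x₀ - b)‖ ^ 2 / (1 + ‖x₀‖ ^ 2) + ρ * ‖x₀‖ ^ 2 ≤
          ‖R (A x - b)‖ ^ 2 / (1 + ‖x‖ ^ 2) + ρ * ‖x‖ ^ 2) ↔
        (∀ x : H, ‖R (A x₀ - b)‖ ^ 2 + ρ * ‖x₀‖ ^ 4 + (ρ - t) * ‖x₀‖ ^ 2 - t ≤
          ‖R (A x - b)‖ ^ 2 + ρ * ‖x‖ ^ 4 + (ρ - t) * ‖x‖ ^ 2 - t)) ∧
      ((∀ x : H, ‖R (A x₀ - b)‖ ^ 2 / (1 + ‖x₀‖ ^ 2) + ρ * ‖x₀‖ ^ 2 ≤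
          ‖R (A x - b)‖ ^ 2 / (1 + ‖x‖ ^ 2) + ρ * ‖x‖ ^ 2) →
        ‖R (A x₀ - b)‖ ^ 2 + ρ * ‖x₀‖ ^ 4 + (ρ - t) * ‖x₀‖ ^ 2 - t = 0) := by
  set G : H → ℝ := fun x => ‖R (A x - b)‖ ^ 2 / (1 + ‖x‖ ^ 2) + ρ * ‖x‖ ^ 2 with hG
  have hnorm_le : ∀ x, ρ * ‖x‖ ^ 2 ≤ G x := fun x => le_add_of_nonneg_left (by positivity)
  have hquartic : ∀ x, ‖R (A x - b)‖ ^ 2 + ρ * ‖x‖ ^ 4 + (ρ - t) * ‖x‖ ^ 2 - t =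
      (1 + ‖x‖ ^ 2) * (G x - t) := fun x => by
    rw [hG]
    field_simp
    ring
  simp only [hquartic]
  subst ht
  refine dinkelbach ⟨0, forall_mem_range.2 fun x => by positivity⟩ (fun x => by positivity)
    (lt_add_one _) (M := 1 + ((⨅ y, G y) + 1) / ρ) fun x hx => ?_
  have : ‖x‖ ^ 2 ≤ ((⨅ y, G y) + 1) / ρ := by
    rw [le_div_iff₀ hρ]
    linarith [hnorm_le x]
  exact add_le_add_right this 1

/-- Dinkelbach reduction: real Hilbert spaces `H, F`, `A ∈ L(H,F)`, `b ∈ F`,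
`W ∈ L(F)` positive with square root `R = W^{1/2}` Hilbert–Schmidt, `ρ > 0`, and
`t* = inf_x [‖Ax−b‖²_W/(1+‖x‖²) + ρ‖x‖²]`.  Then
(a) `inf_x [‖Ax−b‖²_W + ρ‖x‖⁴ + (ρ−t*)‖x‖² − t*] = 0`, and
(b) `x₀` minimizes `G(x) = ‖Ax−b‖²_W/(1+‖x‖²) + ρ‖x‖²` iff `x₀` minimizes
`x ↦ ‖Ax−b‖²_W + ρ‖x‖⁴ + (ρ−t*)‖x‖² − t*`, and at any such minimizer the latter equals 0. -/
theorem stmt12_dinkelbach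
    {H F ι' : Type*} [NormedAddCommGroup H] [InnerProductSpace ℝ H] [CompleteSpace H]
    [NormedAddCommGroup F] [InnerProductSpace ℝ F] [CompleteSpace F]
    (A : H →L[ℝ] F) (b : F) (W R : F →L[ℝ] F)
    (hR : R.IsPositive) (hRW : R.comp R = W)
    (f : HilbertBasis ι' ℝ F) (hHS : Summable fun i => ‖R (f i)‖ ^ 2)
    (ρ : ℝ) (hρ : 0 < ρ) (t : ℝ)
    (ht : t = ⨅ x : H, (‖R (A x - b)‖ ^ 2 / (1 + ‖x‖ ^ 2) + ρ * ‖x‖ ^ 2)) :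
    (⨅ x : H, (‖R (A x - b)‖ ^ 2 + ρ * ‖x‖ ^ 4 + (ρ - t) * ‖x‖ ^ 2 - t)) = 0 ∧
    ∀ x₀ : H,
      ((∀ x : H, ‖R (A x₀ - b)‖ ^ 2 / (1 + ‖x₀‖ ^ 2) + ρ * ‖x₀‖ ^ 2 ≤
          ‖R (A x - b)‖ ^ 2 / (1 + ‖x‖ ^ 2) + ρ * ‖x‖ ^ 2) ↔
        (∀ x : H, ‖R (A x₀ - b)‖ ^ 2 + ρ * ‖x₀‖ ^ 4 + (ρ - t) * ‖x₀‖ ^ 2 - t ≤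
          ‖R (A x - b)‖ ^ 2 + ρ * ‖x‖ ^ 4 + (ρ - t) * ‖x‖ ^ 2 - t)) ∧
      ((∀ x : H, ‖R (A x₀ - b)‖ ^ 2 / (1 + ‖x₀‖ ^ 2) + ρ * ‖x₀‖ ^ 2 ≤
          ‖R (A x - b)‖ ^ 2 / (1 + ‖x‖ ^ 2) + ρ * ‖x‖ ^ 2) →
        ‖R (A x₀ - b)‖ ^ 2 + ρ * ‖x₀‖ ^ 4 + (ρ - t) * ‖x₀‖ ^ 2 - t = 0) :=
  stmt12_dinkelbach_general A b R ρ hρ t ht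
end

section
/- Let H be a real Hilbert space, A ∈ L(H,F), b ∈ F, W ∈ L(F)⁺ with W^{1/2} ∈ S₂, ρ > 0, and set t* = inf_x G(x) where G(x) = ‖Ax−b‖²_W/(1+‖x‖²) + ρ‖x‖². The function φ(t) = inf_x [‖Ax−b‖²_W + ρ‖x‖⁴ + (ρ−t)‖x‖² − t] is strictly decreasing in t, and t* is its unique zero. -/
/-!
Writing `a x = 1 + ‖x‖²`, the integrand of `φ t` factors as `a x * (G x - t)`. Since `a ≥ 1`,
raising `t` by `s - t` lowers every value of the integrand by at least `s - t`, so `φ` is strictly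
decreasing. At `t = t* = inf G` the integrand is nonnegative, and along a minimizing sequence of `G`
the weight `a` stays bounded (because `G x ≥ ρ ‖x‖² = ρ (a x - 1)`), so the infimum is `0`.
-/

open Set

section WeightedGap

variable {X : Type*} {a G : X → ℝ}

theorem bddBelow_range_mul_sub {ρ : ℝ} (hρ : 0 < ρ) (ha : ∀ x, 0 ≤ a x)
    (hcoer : ∀ x, ρ * (a x - 1) ≤ G x) (t : ℝ) :
    BddBelow (range fun x => a x * (G x - t)) := by
  refine ⟨-(ρ + t) ^ 2 / (4 * ρ), ?_⟩
  rintro _ ⟨x, rfl⟩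
  have hlow : a x * (ρ * (a x - 1) - t) ≤ a x * (G x - t) :=
    mul_le_mul_of_nonneg_left (by linarith [hcoer x]) (ha x)
  -- `4ρ · a (ρ (a - 1) - t) + (ρ + t)² = (2ρa - (ρ + t))²`
  have hquad : -(ρ + t) ^ 2 / (4 * ρ) ≤ a x * (ρ * (a x - 1) - t) := by
    rw [div_le_iff₀ (by positivity)]
    nlinarith [sq_nonneg (2 * ρ * a x - (ρ + t))]
  exact hquad.trans hlow

variable [Nonempty X]

theorem strictAnti_iInf_mul_sub (ha : ∀ x, 1 ≤ a x)
    (hbdd : ∀ t, BddBelow (range fun x => a x * (G x - t))) :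
    StrictAnti fun t => ⨅ x, a x * (G x - t) := by
  intro t s hts
  have hshift : (⨅ x, a x * (G x - s)) + (s - t) ≤ ⨅ x, a x * (G x - t) :=
    le_ciInf fun x => by
      have := ciInf_le (hbdd s) x
      nlinarith [ha x]
  dsimp only
  linarith

theorem iInf_mul_sub_iInf_eq_zero (ha : ∀ x, 0 ≤ a x) (hG : BddBelow (range G)) {c M : ℝ}
    (hc : ⨅ x, G x < c) (hM : ∀ x, G x < c → a x ≤ M) :
    ⨅ x, a x * (G x - ⨅ y, G y) = 0 := by
  set m := ⨅ y, G y
  have hgap : ∀ x, 0 ≤ a x * (G x - m) := fun x => mul_nonneg (ha x) (sub_nonneg.2 (ciInf_le hG x))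
  refine le_antisymm (le_of_forall_pos_le_add fun ε hε => ?_) (le_ciInf hgap)
  set K := max M 1
  have hK : 0 < K := lt_max_of_lt_right one_pos
  set δ := min (c - m) (ε / K)
  have hδ : 0 < δ := lt_min (sub_pos.2 hc) (by positivity)
  obtain ⟨x, hx⟩ := exists_lt_of_ciInf_lt (show m < m + δ by linarith)
  have hxc : G x < c := by linarith [min_le_left (c - m) (ε / K)]
  have hax : a x ≤ K := (hM x hxc).trans (le_max_left M 1)
  have hgx : G x - m ≤ ε / K := by linarith [min_le_right (c - m) (ε / K)]
  calc ⨅ x, a x * (G x - m) ≤ a x * (G x - m) := ciInf_le ⟨0, by rintro _ ⟨y, rfl⟩; exact hgap y⟩ x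
    _ ≤ K * (ε / K) := mul_le_mul hax hgx (sub_nonneg.2 (ciInf_le hG x)) hK.le
    _ = 0 + ε := by field_simp; ring

end WeightedGap

theorem stmt13_phi_strict_anti_unique_zero_general
    {H F : Type*} [NormedAddCommGroup H] [InnerProductSpace ℝ H]
    [NormedAddCommGroup F] [InnerProductSpace ℝ F]
    (A : H →L[ℝ] F) (b : F) (R : F →L[ℝ] F)
    (ρ : ℝ) (hρ : 0 < ρ) (t' : ℝ)
    (ht' : t' = ⨅ x : H, (‖R (A x - b)‖ ^ 2 / (1 + ‖x‖ ^ 2) + ρ * ‖x‖ ^ 2))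
    (φ : ℝ → ℝ)
    (hφ : ∀ t : ℝ, φ t = ⨅ x : H,
        (‖R (A x - b)‖ ^ 2 + ρ * ‖x‖ ^ 4 + (ρ - t) * ‖x‖ ^ 2 - t)) :
    StrictAnti φ ∧ φ t' = 0 ∧ ∀ t : ℝ, φ t = 0 → t = t' := by
  set a : H → ℝ := fun x => 1 + ‖x‖ ^ 2
  set G : H → ℝ := fun x => ‖R (A x - b)‖ ^ 2 / (1 + ‖x‖ ^ 2) + ρ * ‖x‖ ^ 2
  have ha : ∀ x, 1 ≤ a x := fun x => le_add_of_nonneg_right (sq_nonneg _)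
  have ha₀ : ∀ x, 0 ≤ a x := fun x => zero_le_one.trans (ha x)
  have hcoer : ∀ x, ρ * (a x - 1) ≤ G x := fun x => by
    have : 0 ≤ ‖R (A x - b)‖ ^ 2 / (1 + ‖x‖ ^ 2) := by positivity
    simp only [a, G]
    linarith
  have hφ' : φ = fun t => ⨅ x, a x * (G x - t) := funext fun t =>
    (hφ t).trans <| iInf_congr fun x => by
      have : 1 + ‖x‖ ^ 2 ≠ 0 := by positivity
      simp only [a, G]
      field_simp
      ring
  have hanti : StrictAnti φ :=
    hφ' ▸ strictAnti_iInf_mul_sub ha (bddBelow_range_mul_sub hρ ha₀ hcoer)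
  have hzero : φ t' = 0 := by
    have hG : BddBelow (range G) :=
      ⟨0, by rintro _ ⟨x, rfl⟩; nlinarith [hcoer x, ha x]⟩
    rw [hφ', ht']
    refine iInf_mul_sub_iInf_eq_zero ha₀ hG (M := 1 + (iInf G + 1) / ρ) (lt_add_one _)
      fun x hx => ?_
    rw [← sub_le_iff_le_add', le_div_iff₀ hρ, mul_comm]
    exact (hcoer x).trans hx.le
  exact ⟨hanti, hzero, fun t ht => hanti.injective (ht.trans hzero.symm)⟩

/-- real Hilbert spaces `H, F`, `A ∈ L(H,F)`, `b ∈ F`, `W ∈ L(F)` positive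
with square root `R = W^{1/2}` Hilbert–Schmidt, `ρ > 0`, and
`t* = inf_x G(x)` with `G(x) = ‖Ax−b‖²_W/(1+‖x‖²) + ρ‖x‖²`.  The function
`φ(t) = inf_x [‖Ax−b‖²_W + ρ‖x‖⁴ + (ρ−t)‖x‖² − t]` is strictly decreasing and `t*` is its
unique zero. -/
theorem stmt13_phi_strict_anti_unique_zero
    {H F ι' : Type*} [NormedAddCommGroup H] [InnerProductSpace ℝ H] [CompleteSpace H]
    [NormedAddCommGroup F] [InnerProductSpace ℝ F] [CompleteSpace F]
    (A : H →L[ℝ] F) (b : F) (W R : F →L[ℝ] F)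
    (hR : R.IsPositive) (hRW : R.comp R = W)
    (f : HilbertBasis ι' ℝ F) (hHS : Summable fun i => ‖R (f i)‖ ^ 2)
    (ρ : ℝ) (hρ : 0 < ρ) (t' : ℝ)
    (ht' : t' = ⨅ x : H, (‖R (A x - b)‖ ^ 2 / (1 + ‖x‖ ^ 2) + ρ * ‖x‖ ^ 2))
    (φ : ℝ → ℝ)
    (hφ : ∀ t : ℝ, φ t = ⨅ x : H,
        (‖R (A x - b)‖ ^ 2 + ρ * ‖x‖ ^ 4 + (ρ - t) * ‖x‖ ^ 2 - t)) :
    StrictAnti φ ∧ φ t' = 0 ∧ ∀ t : ℝ, φ t = 0 → t = t' :=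
  stmt13_phi_strict_anti_unique_zero_general A b R ρ hρ t' ht' φ hφ
end

section
/- Let H be a real Hilbert space, A ∈ L(H,F), b ∈ F, W ∈ L(F)⁺ with W^{1/2} ∈ S₂, ρ > 0, and t* = inf_x G(x) with G(x) = ‖Ax−b‖²_W/(1+‖x‖²) + ρ‖x‖². If ρ ≥ t*, then the function x ↦ ‖Ax−b‖²_W + ρ‖x‖⁴ + (ρ−t*)‖x‖² − t* is strictly convex and coercive, hence has a unique minimizer x₀, and x₀ is the unique minimizer of G. In particular, since t* ≤ G(0) = ‖b‖²_W, if ρ ≥ ‖b‖²_W then G has a unique global minimizer. -/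
/-!
Write `G = N / D` with `D x = 1 + ‖x‖ ^ 2`; then `h = N - t D` is Dinkelbach's parametric function
and `h = D (G - t)`, so `h ≥ 0` when `t = inf G`, with equality exactly at the minimizers of `G`.
The function `h` is a convex function plus `ρ ‖x‖ ^ 4`, which on an inner product space is uniformly
convex: `‖a • x + b • y‖ ^ 4 ≤ a ‖x‖ ^ 4 + b ‖y‖ ^ 4 - a b ‖x - y‖ ^ 4 / 8`. Hence `h` is strictly
convex and its minimizing sequences are Cauchy. Since `G ≥ ρ ‖x‖ ^ 2`, minimizing sequences of `G`
are bounded, so `inf h = 0`, and the limit `x₀` is the unique zero of `h`, i.e. the unique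
minimizer of `G`.
-/

open Filter Set Topology

section InnerProductSpace

variable {E : Type*} [NormedAddCommGroup E] [InnerProductSpace ℝ E]

theorem norm_smul_add_smul_sq (x y : E) {a b : ℝ} (hab : a + b = 1) :
    ‖a • x + b • y‖ ^ 2 = a * ‖x‖ ^ 2 + b * ‖y‖ ^ 2 - a * b * ‖x - y‖ ^ 2 := by
  rw [norm_add_sq_real, norm_sub_sq_real, norm_smul, norm_smul, real_inner_smul_left,
    real_inner_smul_right, Real.norm_eq_abs, Real.norm_eq_abs, mul_pow, mul_pow, sq_abs, sq_abs]
  obtain rfl := eq_sub_of_add_eq hab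
  ring

theorem uniformConvexOn_norm_pow_four :
    UniformConvexOn univ (fun r => r ^ 4 / 8) fun x : E => ‖x‖ ^ 4 := by
  refine ⟨convex_univ, fun x _ y _ a b ha hb hab => ?_⟩
  set X := ‖x‖ ^ 2
  set Y := ‖y‖ ^ 2
  set D := ‖x - y‖ ^ 2
  have hX : 0 ≤ X := by positivity
  have hY : 0 ≤ Y := by positivity
  have hD : 0 ≤ D := by positivity
  have hDXY : D ≤ 2 * X + 2 * Y := by
    nlinarith [norm_sub_le x y, norm_nonneg (x - y), sq_nonneg (‖x‖ - ‖y‖)]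
  have hgap : ∀ U V : ℝ, 0 ≤ U → D ≤ 2 * U + 2 * V → D ^ 2 / 8 ≤ (U - V) ^ 2 + D * U := by
    intro U V hU hS
    have hD2 : D ^ 2 ≤ D * (2 * U + 2 * V) := by nlinarith
    rcases le_total V (3 * U) with h3 | h3
    · nlinarith [mul_nonneg hD (sub_nonneg.2 h3)]
    · nlinarith [mul_nonneg (sub_nonneg.2 hS) (sub_nonneg.2 h3)]
  have hgX := hgap X Y hX hDXY
  have hgY := hgap Y X hY (by linarith)
  have hmid : ‖a • x + b • y‖ ^ 2 = a * X + b * Y - a * b * D := norm_smul_add_smul_sq x y hab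
  have hmid0 : 0 ≤ a * X + b * Y - a * b * D := hmid ▸ sq_nonneg _
  have h4 : ∀ z : ℝ, z ^ 4 = (z ^ 2) ^ 2 := fun z => by ring
  simp only [smul_eq_mul, h4 ‖a • x + b • y‖, h4 ‖x‖, h4 ‖y‖, h4 ‖x - y‖, hmid]
  obtain rfl : b = 1 - a := by linarith
  -- with `M = ‖a • x + b • y‖ ^ 2`,
  -- `a X ^ 2 + b Y ^ 2 - M ^ 2 = a b ((X - Y) ^ 2 + D (a X + b Y + M))`
  nlinarith [mul_nonneg (mul_nonneg ha hb) (mul_nonneg hD hmid0), mul_nonneg ha hb,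
    mul_nonneg (mul_nonneg ha hb) (mul_nonneg ha (sub_nonneg.2 hgX)),
    mul_nonneg (mul_nonneg ha hb) (mul_nonneg hb (sub_nonneg.2 hgY))]

end InnerProductSpace

section NormedSpace

variable {E : Type*} [NormedAddCommGroup E] [NormedSpace ℝ E] {φ : ℝ → ℝ} {f : E → ℝ} {m : ℝ}

theorem convexOn_norm_sub_sq {F : Type*} [NormedAddCommGroup F] [NormedSpace ℝ F]
    (L : E →ₗ[ℝ] F) (c : F) : ConvexOn ℝ univ fun x => ‖L x - c‖ ^ 2 :=
  (convexOn_univ_norm.pow (fun _ _ => norm_nonneg _) 2).comp_affineMap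
    (L.toAffineMap - AffineMap.const ℝ E c)

theorem UniformConvexOn.modulus_le (hf : UniformConvexOn univ φ f) (hm : ∀ z, m ≤ f z)
    (x y : E) : φ ‖x - y‖ ≤ 2 * (f x + f y) - 4 * m := by
  have hmid := hf.2 (mem_univ x) (mem_univ y) (by norm_num : (0 : ℝ) ≤ 1 / 2)
    (by norm_num : (0 : ℝ) ≤ 1 / 2) (by norm_num)
  have := hm ((1 / 2 : ℝ) • x + (1 / 2 : ℝ) • y)
  simp only [smul_eq_mul] at hmid
  linarith

theorem UniformConvexOn.cauchySeq_of_tendsto (hf : UniformConvexOn univ φ f)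
    (hφ : MonotoneOn φ (Ici 0)) (hφpos : ∀ r, 0 < r → 0 < φ r) (hm : ∀ z, m ≤ f z)
    {u : ℕ → E} (hu : Tendsto (f ∘ u) atTop (𝓝 m)) : CauchySeq u := by
  refine Metric.cauchySeq_iff'.2 fun ε hε => ?_
  have hδ : 0 < φ ε / 4 := by have := hφpos ε hε; positivity
  obtain ⟨N, hN⟩ := eventually_atTop.1 (hu.eventually (gt_mem_nhds (lt_add_of_pos_right m hδ)))
  refine ⟨N, fun n hn => ?_⟩
  rw [dist_eq_norm]
  by_contra! hle
  have hφε := hφ (mem_Ici.2 hε.le) (mem_Ici.2 (hε.le.trans hle)) hle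
  have hgap := hf.modulus_le hm (u n) (u N)
  have hun : f (u n) < m + φ ε / 4 := hN n hn
  have huN : f (u N) < m + φ ε / 4 := hN N le_rfl
  linarith

theorem UniformConvexOn.const_mul {s : Set E} (hf : UniformConvexOn s φ f) {c : ℝ} (hc : 0 ≤ c) :
    UniformConvexOn s (fun r => c * φ r) fun x => c * f x :=
  ⟨hf.1, fun x hx y hy a b ha hb hab => by
    have := mul_le_mul_of_nonneg_left (hf.2 hx hy ha hb hab) hc
    simp only [smul_eq_mul] at *
    linarith⟩

theorem UniformConvexOn.exists_isMinOn [CompleteSpace E] (hf : UniformConvexOn univ φ f)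
    (hφ : MonotoneOn φ (Ici 0)) (hφpos : ∀ r, 0 < r → 0 < φ r) (hcont : Continuous f)
    (hbdd : BddBelow (range f)) : ∃ x, IsMinOn f univ x := by
  obtain ⟨v, -, hv, hvf⟩ := exists_seq_tendsto_sInf (range_nonempty f) hbdd
  choose u hu using hvf
  have hfu : Tendsto (f ∘ u) atTop (𝓝 (sInf (range f))) := by
    simpa only [Function.comp_def, hu] using hv
  have hm : ∀ z, sInf (range f) ≤ f z := fun z => csInf_le hbdd (mem_range_self z)
  obtain ⟨x, hx⟩ := cauchySeq_tendsto_of_complete (hf.cauchySeq_of_tendsto hφ hφpos hm hfu)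
  have hfx : f x = sInf (range f) := tendsto_nhds_unique ((hcont.tendsto x).comp hx) hfu
  exact ⟨x, isMinOn_univ_iff.2 fun z => hfx ▸ hm z⟩

end NormedSpace

section Dinkelbach

variable {E : Type*} [NormedAddCommGroup E]

/-- The regularized total least squares objective, `G` of the paper for `g x = ‖A x - b‖²_W`. -/
noncomputable def rtlsObjective (g : E → ℝ) (ρ : ℝ) (x : E) : ℝ :=
  g x / (1 + ‖x‖ ^ 2) + ρ * ‖x‖ ^ 2

/-- Dinkelbach's parametric function `N x - t * D x` for the fraction `N / D = rtlsObjective g ρ`,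
where `N x = g x + ρ * ‖x‖ ^ 2 * (1 + ‖x‖ ^ 2)` and `D x = 1 + ‖x‖ ^ 2`. -/
def dinkelbachFunction (g : E → ℝ) (ρ t : ℝ) (x : E) : ℝ :=
  g x + ρ * ‖x‖ ^ 4 + (ρ - t) * ‖x‖ ^ 2 - t

variable {g : E → ℝ} {ρ t : ℝ}

theorem mul_norm_sq_le_rtlsObjective (hg : ∀ x, 0 ≤ g x) (x : E) :
    ρ * ‖x‖ ^ 2 ≤ rtlsObjective g ρ x :=
  le_add_of_nonneg_left (div_nonneg (hg x) (by positivity))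

theorem dinkelbachFunction_eq_mul (x : E) :
    dinkelbachFunction g ρ t x = (1 + ‖x‖ ^ 2) * (rtlsObjective g ρ x - t) := by
  have : 1 + ‖x‖ ^ 2 ≠ 0 := by positivity
  simp only [dinkelbachFunction, rtlsObjective]
  field_simp
  ring

theorem dinkelbachFunction_eq_zero_iff {x : E} :
    dinkelbachFunction g ρ t x = 0 ↔ rtlsObjective g ρ x = t := by
  rw [dinkelbachFunction_eq_mul, mul_eq_zero, sub_eq_zero, or_iff_right (by positivity)]

theorem dinkelbachFunction_nonneg (ht : ∀ y, t ≤ rtlsObjective g ρ y) (x : E) :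
    0 ≤ dinkelbachFunction g ρ t x := by
  rw [dinkelbachFunction_eq_mul]
  exact mul_nonneg (by positivity) (sub_nonneg.2 (ht x))

theorem continuous_dinkelbachFunction (hg : Continuous g) :
    Continuous (dinkelbachFunction g ρ t) := by
  unfold dinkelbachFunction
  fun_prop

theorem tendsto_dinkelbachFunction_cobounded (hg : ∀ x, 0 ≤ g x) (hρ : 0 < ρ) (hρt : t ≤ ρ) :
    Tendsto (dinkelbachFunction g ρ t) (Bornology.cobounded E) atTop := by
  have hlow : ∀ x : E, ρ * ‖x‖ ^ 4 - t ≤ dinkelbachFunction g ρ t x := fun x => by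
    have : 0 ≤ (ρ - t) * ‖x‖ ^ 2 := mul_nonneg (sub_nonneg.2 hρt) (by positivity)
    unfold dinkelbachFunction
    linarith [hg x]
  have hquartic : Tendsto (fun r : ℝ => ρ * r ^ 4 - t) atTop atTop :=
    tendsto_atTop_add_const_right _ _ ((tendsto_pow_atTop (by norm_num)).const_mul_atTop hρ)
  exact tendsto_atTop_mono hlow (hquartic.comp tendsto_norm_cobounded_atTop)

theorem uniformConvexOn_dinkelbachFunction [InnerProductSpace ℝ E] (hg : ConvexOn ℝ univ g)
    (hρ : 0 ≤ ρ) (hρt : t ≤ ρ) :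
    UniformConvexOn univ (fun r => ρ * (r ^ 4 / 8)) (dinkelbachFunction g ρ t) := by
  have hquad : ConvexOn ℝ univ fun x : E => (ρ - t) * ‖x‖ ^ 2 - t :=
    ((convexOn_univ_norm.pow (fun _ _ => norm_nonneg _) 2).smul (sub_nonneg.2 hρt)).sub
      (concaveOn_const t convex_univ)
  convert (hg.uniformConvexOn_zero.add (uniformConvexOn_norm_pow_four.const_mul hρ)).add
    hquad.uniformConvexOn_zero using 1
  · simp
  · funext x
    simp only [Pi.add_apply, dinkelbachFunction]
    ring

theorem exists_dinkelbachFunction_lt (hg : ∀ x, 0 ≤ g x) (hρ : 0 < ρ)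
    (ht : IsGLB (range (rtlsObjective g ρ)) t) {ε : ℝ} (hε : 0 < ε) :
    ∃ x, dinkelbachFunction g ρ t x < ε := by
  have ht0 : 0 ≤ t := ht.2 <| forall_mem_range.2 fun x =>
    (mul_nonneg hρ.le (sq_nonneg _)).trans (mul_norm_sq_le_rtlsObjective hg x)
  set K := 1 + (t + 1) / ρ
  have hK : 0 < K := by positivity
  obtain ⟨_, ⟨x, rfl⟩, htx, hxδ⟩ :=
    ht.exists_between (lt_add_of_pos_right t (lt_min one_pos (div_pos hε hK)))
  have hδ := min_le_left 1 (ε / K)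
  have hxK : 1 + ‖x‖ ^ 2 ≤ K := by
    have := mul_norm_sq_le_rtlsObjective (ρ := ρ) hg x
    have : ‖x‖ ^ 2 ≤ (t + 1) / ρ := by rw [le_div_iff₀ hρ]; linarith
    linarith
  refine ⟨x, ?_⟩
  rw [dinkelbachFunction_eq_mul]
  calc (1 + ‖x‖ ^ 2) * (rtlsObjective g ρ x - t) ≤ K * (rtlsObjective g ρ x - t) := by
        gcongr
    _ < K * (ε / K) := by gcongr; linarith [min_le_right 1 (ε / K)]
    _ = ε := by field_simp

theorem exists_dinkelbachFunction_eq_zero [InnerProductSpace ℝ E] [CompleteSpace E]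
    (hg : ConvexOn ℝ univ g) (hg0 : ∀ x, 0 ≤ g x) (hgc : Continuous g) (hρ : 0 < ρ)
    (hρt : t ≤ ρ) (ht : IsGLB (range (rtlsObjective g ρ)) t) :
    ∃ x₀, dinkelbachFunction g ρ t x₀ = 0 := by
  have hnonneg := dinkelbachFunction_nonneg (t := t) fun y => ht.1 (mem_range_self y)
  obtain ⟨x₀, hx₀⟩ := (uniformConvexOn_dinkelbachFunction hg hρ.le hρt).exists_isMinOn
    (fun r hr s _ hrs => by have := mem_Ici.1 hr; gcongr) (fun r hr => by positivity)
    (continuous_dinkelbachFunction hgc) ⟨0, forall_mem_range.2 hnonneg⟩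
  refine ⟨x₀, le_antisymm (not_lt.1 fun hpos => ?_) (hnonneg x₀)⟩
  obtain ⟨x, hx⟩ := exists_dinkelbachFunction_lt hg0 hρ ht hpos
  exact (isMinOn_univ_iff.1 hx₀ x).not_gt hx

end Dinkelbach

theorem stmt14_unique_solution_rho_ge_tstar_general
    {H F : Type*} [NormedAddCommGroup H] [InnerProductSpace ℝ H] [CompleteSpace H]
    [NormedAddCommGroup F] [InnerProductSpace ℝ F]
    (A : H →L[ℝ] F) (b : F) (R : F →L[ℝ] F)
    (ρ : ℝ) (hρ : 0 < ρ) (t : ℝ)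
    (ht : t = ⨅ x : H, (‖R (A x - b)‖ ^ 2 / (1 + ‖x‖ ^ 2) + ρ * ‖x‖ ^ 2))
    (hρt : t ≤ ρ) :
    StrictConvexOn ℝ Set.univ
        (fun x : H => ‖R (A x - b)‖ ^ 2 + ρ * ‖x‖ ^ 4 + (ρ - t) * ‖x‖ ^ 2 - t) ∧
    Filter.Tendsto
        (fun x : H => ‖R (A x - b)‖ ^ 2 + ρ * ‖x‖ ^ 4 + (ρ - t) * ‖x‖ ^ 2 - t)
        (Bornology.cobounded H) Filter.atTop ∧
    (∃ x₀ : H,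
        (∀ x : H, ‖R (A x₀ - b)‖ ^ 2 + ρ * ‖x₀‖ ^ 4 + (ρ - t) * ‖x₀‖ ^ 2 - t ≤
            ‖R (A x - b)‖ ^ 2 + ρ * ‖x‖ ^ 4 + (ρ - t) * ‖x‖ ^ 2 - t) ∧
        (∀ y : H, (∀ x : H, ‖R (A y - b)‖ ^ 2 + ρ * ‖y‖ ^ 4 + (ρ - t) * ‖y‖ ^ 2 - t ≤
            ‖R (A x - b)‖ ^ 2 + ρ * ‖x‖ ^ 4 + (ρ - t) * ‖x‖ ^ 2 - t) → y = x₀) ∧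
        (∀ x : H, ‖R (A x₀ - b)‖ ^ 2 / (1 + ‖x₀‖ ^ 2) + ρ * ‖x₀‖ ^ 2 ≤
            ‖R (A x - b)‖ ^ 2 / (1 + ‖x‖ ^ 2) + ρ * ‖x‖ ^ 2) ∧
        (∀ y : H, (∀ x : H, ‖R (A y - b)‖ ^ 2 / (1 + ‖y‖ ^ 2) + ρ * ‖y‖ ^ 2 ≤
            ‖R (A x - b)‖ ^ 2 / (1 + ‖x‖ ^ 2) + ρ * ‖x‖ ^ 2) → y = x₀)) ∧
    t ≤ ‖R b‖ ^ 2 := by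
  set g : H → ℝ := fun x => ‖R (A x - b)‖ ^ 2
  have hg0 : ∀ x, 0 ≤ g x := fun x => sq_nonneg _
  have hg : ConvexOn ℝ univ g := by
    convert convexOn_norm_sub_sq ((R.comp A : H →L[ℝ] F) : H →ₗ[ℝ] F) (R b) using 1
    simp [g]
  have hglb : IsGLB (range (rtlsObjective g ρ)) t := ht ▸ isGLB_ciInf ⟨0, forall_mem_range.2
    fun x => (mul_nonneg hρ.le (sq_nonneg _)).trans (mul_norm_sq_le_rtlsObjective hg0 x)⟩
  have hGt : ∀ x, t ≤ rtlsObjective g ρ x := fun x => hglb.1 (mem_range_self x)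
  have hnonneg := dinkelbachFunction_nonneg hGt
  have hstrict := (uniformConvexOn_dinkelbachFunction hg hρ.le hρt).strictConvexOn
    fun r hr => by positivity
  obtain ⟨x₀, hx₀⟩ := exists_dinkelbachFunction_eq_zero hg hg0 (by fun_prop) hρ hρt hglb
  have hGx₀ : rtlsObjective g ρ x₀ = t := dinkelbachFunction_eq_zero_iff.1 hx₀
  have huniq : ∀ y, dinkelbachFunction g ρ t y = 0 → y = x₀ := fun y hy =>
    hstrict.eq_of_isMinOn (isMinOn_univ_iff.2 fun x => hy.trans_le (hnonneg x))
      (isMinOn_univ_iff.2 fun x => hx₀.trans_le (hnonneg x)) trivial trivial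
  refine ⟨hstrict, tendsto_dinkelbachFunction_cobounded hg0 hρ hρt, ⟨x₀,
    fun x => hx₀.trans_le (hnonneg x),
    fun y hy => huniq y (((hy x₀).trans hx₀.le).antisymm (hnonneg y)),
    fun x => hGx₀.trans_le (hGt x),
    fun y hy => huniq y (dinkelbachFunction_eq_zero_iff.2
      (((hy x₀).trans hGx₀.le).antisymm (hGt y)))⟩, ?_⟩
  simpa [rtlsObjective, g] using hGt 0

/-- real Hilbert spaces `H, F`, `A ∈ L(H,F)`, `b ∈ F`, `W ∈ L(F)` positive
with square root `R = W^{1/2}` Hilbert–Schmidt, `ρ > 0`, `t* = inf_x G(x)` with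
`G(x) = ‖Ax−b‖²_W/(1+‖x‖²) + ρ‖x‖²`.  If `ρ ≥ t*` then the function
`h(x) = ‖Ax−b‖²_W + ρ‖x‖⁴ + (ρ−t*)‖x‖² − t*` is strictly convex and coercive, has a unique
minimizer `x₀`, and `x₀` is also the unique minimizer of `G`.  Moreover `t* ≤ G(0) = ‖b‖²_W`
(so in particular if `ρ ≥ ‖b‖²_W` then `G` has a unique global minimizer). -/
theorem stmt14_unique_solution_rho_ge_tstar
    {H F ι' : Type*} [NormedAddCommGroup H] [InnerProductSpace ℝ H] [CompleteSpace H]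
    [NormedAddCommGroup F] [InnerProductSpace ℝ F] [CompleteSpace F]
    (A : H →L[ℝ] F) (b : F) (W R : F →L[ℝ] F)
    (hR : R.IsPositive) (hRW : R.comp R = W)
    (f : HilbertBasis ι' ℝ F) (hHS : Summable fun i => ‖R (f i)‖ ^ 2)
    (ρ : ℝ) (hρ : 0 < ρ) (t : ℝ)
    (ht : t = ⨅ x : H, (‖R (A x - b)‖ ^ 2 / (1 + ‖x‖ ^ 2) + ρ * ‖x‖ ^ 2))
    (hρt : t ≤ ρ) :
    StrictConvexOn ℝ Set.univ
        (fun x : H => ‖R (A x - b)‖ ^ 2 + ρ * ‖x‖ ^ 4 + (ρ - t) * ‖x‖ ^ 2 - t) ∧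
    Filter.Tendsto
        (fun x : H => ‖R (A x - b)‖ ^ 2 + ρ * ‖x‖ ^ 4 + (ρ - t) * ‖x‖ ^ 2 - t)
        (Bornology.cobounded H) Filter.atTop ∧
    (∃ x₀ : H,
        (∀ x : H, ‖R (A x₀ - b)‖ ^ 2 + ρ * ‖x₀‖ ^ 4 + (ρ - t) * ‖x₀‖ ^ 2 - t ≤
            ‖R (A x - b)‖ ^ 2 + ρ * ‖x‖ ^ 4 + (ρ - t) * ‖x‖ ^ 2 - t) ∧
        (∀ y : H, (∀ x : H, ‖R (A y - b)‖ ^ 2 + ρ * ‖y‖ ^ 4 + (ρ - t) * ‖y‖ ^ 2 - t ≤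
            ‖R (A x - b)‖ ^ 2 + ρ * ‖x‖ ^ 4 + (ρ - t) * ‖x‖ ^ 2 - t) → y = x₀) ∧
        (∀ x : H, ‖R (A x₀ - b)‖ ^ 2 / (1 + ‖x₀‖ ^ 2) + ρ * ‖x₀‖ ^ 2 ≤
            ‖R (A x - b)‖ ^ 2 / (1 + ‖x‖ ^ 2) + ρ * ‖x‖ ^ 2) ∧
        (∀ y : H, (∀ x : H, ‖R (A y - b)‖ ^ 2 / (1 + ‖y‖ ^ 2) + ρ * ‖y‖ ^ 2 ≤
            ‖R (A x - b)‖ ^ 2 / (1 + ‖x‖ ^ 2) + ρ * ‖x‖ ^ 2) → y = x₀)) ∧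
    t ≤ ‖R b‖ ^ 2 :=
  stmt14_unique_solution_rho_ge_tstar_general A b R ρ hρ t ht hρt
end

section
/- Let E₀ be a Banach space failing the Dunford–Pettis property, witnessed by weakly null sequences (yₙ) ⊂ E₀ and (yₙ') ⊂ E₀* with yₙ'(yₙ) → 1, and let E₁ be any Banach space with a nonzero vector y₁. Define compact operators Xₙ = yₙ'(·)y₁. Then (Xₙ) converges weakly to 0 in K(E₀,E₁) and (yₙ) converges weakly to 0 in E₀, but B(Xₙ, yₙ) = yₙ'(yₙ)y₁ → y₁ ≠ 0. Hence the bilinear map B : K(E₀,E₁) × E₀ → E₁, B(X,y) = Xy, is not weakly sequentially continuous. -/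
/-!
The rank-one operators `Xₙ = yₙ'(·) y₁` factor through the scalar field, hence are
compact, and `y' ↦ y'(·) y₁` is a bounded linear map `E₀* → L(E₀, E₁)`, so it carries the
weakly null sequence `(yₙ')` to a weakly null sequence. Yet `Xₙ yₙ = yₙ'(yₙ) y₁ → y₁ ≠ 0`.
-/

open Filter

theorem isCompactOperator_smulRight {𝕜 E F : Type*} [NontriviallyNormedField 𝕜]
    [LocallyCompactSpace 𝕜] [NormedAddCommGroup E] [NormedSpace 𝕜 E] [NormedAddCommGroup F]
    [NormedSpace 𝕜 F] (f : E →L[𝕜] 𝕜) (v : F) : IsCompactOperator (f.smulRight v) := by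
  rw [← ContinuousLinearMap.toSpanSingleton_comp]
  exact (isCompactOperator_of_locallyCompactSpace_rng
    (ContinuousLinearMap.toSpanSingleton 𝕜 v)).comp_clm f

theorem ContinuousLinearMap.tendsto_dual_apply_of_forall_tendsto_dual_apply
    {𝕜 X Y ι : Type*} [NontriviallyNormedField 𝕜] [NormedAddCommGroup X] [NormedSpace 𝕜 X]
    [NormedAddCommGroup Y] [NormedSpace 𝕜 Y] (T : X →L[𝕜] Y) {x : ι → X} {l : Filter ι}
    (hx : ∀ Φ : X →L[𝕜] 𝕜, Tendsto (fun i => Φ (x i)) l (nhds 0)) (Ψ : Y →L[𝕜] 𝕜) :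
    Tendsto (fun i => Ψ (T (x i))) l (nhds 0) :=
  hx (Ψ.comp T)

theorem tendsto_smulRight_apply {𝕜 E F ι : Type*} [NontriviallyNormedField 𝕜]
    [NormedAddCommGroup E] [NormedSpace 𝕜 E] [NormedAddCommGroup F] [NormedSpace 𝕜 F]
    {f : ι → E →L[𝕜] 𝕜} {x : ι → E} {l : Filter ι} {c : 𝕜}
    (h : Tendsto (fun i => f i (x i)) l (nhds c)) (v : F) :
    Tendsto (fun i => (f i).smulRight v (x i)) l (nhds (c • v)) :=
  h.smul_const v

theorem stmt17_dunford_pettis_failure_counterexample_general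
    {E₀ E₁ : Type*} [NormedAddCommGroup E₀] [NormedSpace ℝ E₀]
    [NormedAddCommGroup E₁] [NormedSpace ℝ E₁]
    (y : ℕ → E₀) (y' : ℕ → (E₀ →L[ℝ] ℝ)) (y₁ : E₁) (hy₁ : y₁ ≠ 0)
    (hy'_weak : ∀ Φ : (E₀ →L[ℝ] ℝ) →L[ℝ] ℝ, Tendsto (fun n => Φ (y' n)) atTop (nhds 0))
    (hpair : Tendsto (fun n => (y' n) (y n)) atTop (nhds 1)) :
    (∀ n : ℕ, IsCompactOperator ((y' n).smulRight y₁)) ∧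
    (∀ Φ : (E₀ →L[ℝ] E₁) →L[ℝ] ℝ,
        Tendsto (fun n => Φ ((y' n).smulRight y₁)) atTop (nhds 0)) ∧
    Tendsto (fun n => ((y' n).smulRight y₁) (y n)) atTop (nhds y₁) ∧
    ¬ Tendsto (fun n => ((y' n).smulRight y₁) (y n)) atTop (nhds 0) := by
  have hlim : Tendsto (fun n => ((y' n).smulRight y₁) (y n)) atTop (nhds y₁) := by
    simpa only [one_smul] using tendsto_smulRight_apply hpair y₁
  let applyTo_y₁ : (E₀ →L[ℝ] ℝ) →L[ℝ] E₀ →L[ℝ] E₁ :=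
    (ContinuousLinearMap.smulRightL ℝ E₀ E₁).flip y₁
  exact ⟨fun n => isCompactOperator_smulRight (y' n) y₁,
    applyTo_y₁.tendsto_dual_apply_of_forall_tendsto_dual_apply hy'_weak, hlim,
    fun h0 => hy₁ (tendsto_nhds_unique hlim h0)⟩

/-- `E₀` a Banach space failing the Dunford–Pettis property, witnessed by
weakly null sequences `(yₙ) ⊆ E₀` and `(yₙ') ⊆ E₀*` with `yₙ'(yₙ) → 1`, and `E₁` a Banach
space with `y₁ ≠ 0`.  The compact rank-one operators `Xₙ = yₙ'(·)y₁` converge weakly to `0`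
in the space of compact operators (tested against every continuous linear functional on
`L(E₀,E₁)`, equivalently on `K(E₀,E₁)` by Hahn–Banach) and `(yₙ)` is weakly null, but
`B(Xₙ,yₙ) = yₙ'(yₙ)y₁ → y₁ ≠ 0`; hence `B(X,y) = Xy` is not weakly sequentially continuous. -/
theorem stmt17_dunford_pettis_failure_counterexample
    {E₀ E₁ : Type*} [NormedAddCommGroup E₀] [NormedSpace ℝ E₀] [CompleteSpace E₀]
    [NormedAddCommGroup E₁] [NormedSpace ℝ E₁] [CompleteSpace E₁]
    (y : ℕ → E₀) (y' : ℕ → (E₀ →L[ℝ] ℝ)) (y₁ : E₁) (hy₁ : y₁ ≠ 0)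
    (hy_weak : ∀ g : E₀ →L[ℝ] ℝ, Tendsto (fun n => g (y n)) atTop (nhds 0))
    (hy'_weak : ∀ Φ : (E₀ →L[ℝ] ℝ) →L[ℝ] ℝ, Tendsto (fun n => Φ (y' n)) atTop (nhds 0))
    (hpair : Tendsto (fun n => (y' n) (y n)) atTop (nhds 1)) :
    (∀ n : ℕ, IsCompactOperator ((y' n).smulRight y₁)) ∧
    (∀ Φ : (E₀ →L[ℝ] E₁) →L[ℝ] ℝ,
        Tendsto (fun n => Φ ((y' n).smulRight y₁)) atTop (nhds 0)) ∧
    Tendsto (fun n => ((y' n).smulRight y₁) (y n)) atTop (nhds y₁) ∧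
    ¬ Tendsto (fun n => ((y' n).smulRight y₁) (y n)) atTop (nhds 0) :=
  stmt17_dunford_pettis_failure_counterexample_general y y' y₁ hy₁ hy'_weak hpair
end
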